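/- Fix T₀ > 0, M, C, L ≥ 0 and α ∈ (0,1]. There is a constant K, depending only on M, C, L, T₀ and α, such that the following holds. Let E be a real Banach space, let T : [0,T₀] → L(E) be a family of bounded linear operators with T_0 = I, T_{s+t} = T_s ∘ T_t whenever s, t, s+t ∈ [0,T₀], and ‖T_t‖ ≤ M for all t ∈ [0,T₀]; let A : E → E be a bounded linear operator with A(T_t x) = T_t(A x) for all t, x, and ‖A ∘ T_t‖ ≤ C/t^{1−α} for all t ∈ (0,T₀]. Let 0 < τ ≤ min(1, T₀), and let (e_n), (E_n), (h_n), (r_n) be sequences in E with e_0 = 0 and e_{n+1} = T_τ(e_n) + E_n + A(h_{n+1}) + r_{n+1} for all n, where ‖E_n‖ ≤ L τ ‖e_n‖, ‖h_n‖ ≤ C τ², ‖r_n‖ ≤ C τ², and ‖A(h_n) + r_n‖ ≤ C τ for all n. Then ‖e_n‖ ≤ K τ for every n with n τ ≤ T₀. -/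

import Mathlib

/-!
Unrolling the recursion (discrete Duhamel formula, using `T (k τ) = (T τ)^k`) writes `e n` as
`∑_{k<n} T(kτ) E'_{n-1-k}` plus `∑_{k<n} T(kτ) δ_{n-1-k}` with local errors `δ = A h + r`.
The first sum is at most `M L τ ∑_{k<n} ‖e k‖`. In the second, the term `k = 0` is `O(τ)`,
and for `k ≥ 1` commuting `A` past `T(kτ)` gives `C (kτ)^(α-1) ‖h‖ + M ‖r‖ = O(τ² (kτ)^(α-1) + τ²)`.
Since `t ↦ t^(α-1)` is integrable at `0`, `∑_{k ≥ 1} τ (kτ)^(α-1) ≤ T₀^α / α`, so the second sum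
is `O(τ)` with no logarithmic factor. A discrete Grönwall inequality concludes.
-/

open Finset

namespace Real

theorem mul_sub_div_rpow_le_rpow_sub_rpow {a b α : ℝ} (ha : 0 ≤ a) (hb : 0 < b)
    (hα0 : 0 ≤ α) (hα1 : α ≤ 1) : α * (b - a) / b ^ (1 - α) ≤ b ^ α - a ^ α := by
  have hbernoulli : a ^ α ≤ b ^ α * (1 + α * ((a - b) / b)) := by
    have h := rpow_one_add_le_one_add_mul_self (s := (a - b) / b)
      (by rw [le_div_iff₀ hb]; linarith) hα0 hα1
    rwa [show 1 + (a - b) / b = a / b by field_simp; ring, div_rpow ha hb.le,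
      div_le_iff₀' (rpow_pos_of_pos hb α)] at h
  rw [rpow_sub hb, rpow_one, div_div_eq_mul_div]
  have : b ^ α * (α * ((a - b) / b)) = -(α * (b - a) * b ^ α / b) := by ring
  linarith

/-- A right Riemann sum of the decreasing function `t ↦ t ^ (α - 1)`, dominated by its integral
over `[0, n τ]`. -/
theorem sum_div_rpow_le {α τ : ℝ} (hα0 : 0 < α) (hα1 : α ≤ 1) (hτ : 0 < τ) (n : ℕ) :
    ∑ k ∈ range n, τ / ((k + 1) * τ) ^ (1 - α) ≤ (n * τ) ^ α / α := by
  rw [le_div_iff₀ hα0, sum_mul]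
  calc ∑ k ∈ range n, τ / ((k + 1) * τ) ^ (1 - α) * α
      ≤ ∑ k ∈ range n, ((((k + 1 : ℕ) : ℝ) * τ) ^ α - ((k : ℝ) * τ) ^ α) := by
        gcongr with k
        have h := mul_sub_div_rpow_le_rpow_sub_rpow (a := k * τ) (b := (k + 1) * τ)
          (by positivity) (by positivity) hα0.le hα1
        push_cast
        exact le_of_eq_of_le (by ring) h
    _ = (n * τ) ^ α := by
        rw [sum_range_sub (fun k : ℕ ↦ ((k : ℝ) * τ) ^ α)]
        simp [zero_rpow hα0.ne']

theorem one_add_mul_pow_le_exp {a τ T₀ : ℝ} {n : ℕ} (ha : 0 ≤ a) (hτ : 0 ≤ τ)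
    (hn : n * τ ≤ T₀) : (1 + a * τ) ^ n ≤ exp (a * T₀) :=
  calc (1 + a * τ) ^ n ≤ exp (a * τ) ^ n := by
        gcongr
        linarith [add_one_le_exp (a * τ)]
    _ = exp (a * (n * τ)) := by rw [← exp_nat_mul]; ring_nf
    _ ≤ exp (a * T₀) := by gcongr

end Real

theorem le_mul_one_add_pow_of_le_mul_sum_add {u : ℕ → ℝ} {a b : ℝ} {N : ℕ} (ha : 0 ≤ a)
    (hu : ∀ n ≤ N, u n ≤ a * ∑ k ∈ range n, u k + b) : ∀ n ≤ N, u n ≤ b * (1 + a) ^ n := by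
  intro n
  induction n using Nat.strong_induction_on with
  | _ n ih =>
    intro hn
    calc u n ≤ a * ∑ k ∈ range n, u k + b := hu n hn
      _ ≤ a * ∑ k ∈ range n, b * (1 + a) ^ k + b := by
          gcongr with k hk
          exact ih k (mem_range.mp hk) (by grind)
      _ = b * (1 + a) ^ n := by
          have h := geom_sum_mul (1 + a) n
          rw [add_sub_cancel_left] at h
          rw [← mul_sum]
          linear_combination b * h

theorem eq_sum_pow_smul_of_eq_smul_add {R M : Type*} [Monoid R] [AddCommMonoid M]
    [DistribMulAction R M] {S : R} {e f : ℕ → M} (h0 : e 0 = 0)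
    (hsucc : ∀ n, e (n + 1) = S • e n + f n) (n : ℕ) :
    e n = ∑ k ∈ range n, S ^ k • f (n - 1 - k) := by
  induction n with
  | zero => simpa using h0
  | succ n ih =>
    rw [hsucc, ih, smul_sum, sum_range_succ']
    simp only [smul_smul, ← pow_succ', pow_zero, one_smul, add_tsub_cancel_right, tsub_zero]
    congr 1
    exact sum_congr rfl fun k hk ↦ by rw [show n - (k + 1) = n - 1 - k by omega]

section Semigroup

variable {X : Type*} [NormedAddCommGroup X] [NormedSpace ℝ X] {T : ℝ → X →L[ℝ] X} {T₀ : ℝ}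

theorem natCast_mul_eq_pow_of_add_eq_comp (h0 : T 0 = ContinuousLinearMap.id ℝ X)
    (hadd : ∀ s t : ℝ, 0 ≤ s → 0 ≤ t → s + t ≤ T₀ → T (s + t) = (T s).comp (T t))
    {τ : ℝ} (hτ : 0 ≤ τ) (k : ℕ) (hk : k * τ ≤ T₀) : T (k * τ) = T τ ^ k := by
  induction k with
  | zero => simpa [ContinuousLinearMap.one_def] using h0
  | succ k ih =>
    push_cast at hk ⊢
    rw [add_one_mul, add_comm, hadd _ _ hτ (by positivity) (by linarith), pow_succ',
      ih (by linarith), ContinuousLinearMap.mul_def]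

theorem eq_sum_apply_of_eq_apply_add (h0 : T 0 = ContinuousLinearMap.id ℝ X)
    (hadd : ∀ s t : ℝ, 0 ≤ s → 0 ≤ t → s + t ≤ T₀ → T (s + t) = (T s).comp (T t))
    {τ : ℝ} (hτ : 0 ≤ τ) {e f : ℕ → X} (he0 : e 0 = 0)
    (hsucc : ∀ n, e (n + 1) = T τ (e n) + f n) {n : ℕ} (hn : n * τ ≤ T₀) :
    e n = ∑ k ∈ range n, T (k * τ) (f (n - 1 - k)) := by
  rw [eq_sum_pow_smul_of_eq_smul_add (S := T τ) he0 hsucc n]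
  refine sum_congr rfl fun k hk ↦ ?_
  have hkn : (k : ℝ) ≤ n := by exact_mod_cast (mem_range.mp hk).le
  rw [natCast_mul_eq_pow_of_add_eq_comp h0 hadd hτ k
    ((mul_le_mul_of_nonneg_right hkn hτ).trans hn), ContinuousLinearMap.smul_def]

theorem norm_sum_apply_le {M τ : ℝ} (hT : ∀ t ∈ Set.Icc 0 T₀, ‖T t‖ ≤ M) (hτ : 0 ≤ τ) {n : ℕ}
    (hn : n * τ ≤ T₀) (v : ℕ → X) :
    ‖∑ k ∈ range n, T (k * τ) (v k)‖ ≤ M * ∑ k ∈ range n, ‖v k‖ := by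
  rw [mul_sum]
  refine (norm_sum_le _ _).trans (sum_le_sum fun k hk ↦ ?_)
  have hkn : (k : ℝ) ≤ n := by exact_mod_cast (mem_range.mp hk).le
  refine (T _).le_of_opNorm_le (hT _ ⟨by positivity, ?_⟩) _
  exact (mul_le_mul_of_nonneg_right hkn hτ).trans hn

variable {A : X →L[ℝ] X} {M C α : ℝ}

theorem norm_apply_map_add_le (hT : ∀ t ∈ Set.Icc 0 T₀, ‖T t‖ ≤ M)
    (hcomm : ∀ t ∈ Set.Icc 0 T₀, ∀ x, A (T t x) = T t (A x))
    (hsmooth : ∀ t ∈ Set.Ioc 0 T₀, ‖A.comp (T t)‖ ≤ C / t ^ (1 - α))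
    {t : ℝ} (ht : t ∈ Set.Ioc 0 T₀) (x y : X) :
    ‖T t (A x + y)‖ ≤ C / t ^ (1 - α) * ‖x‖ + M * ‖y‖ := by
  rw [map_add, ← hcomm t (Set.Ioc_subset_Icc_self ht)]
  exact (norm_add_le _ _).trans <| add_le_add ((A.comp (T t)).le_of_opNorm_le (hsmooth t ht) x)
    ((T t).le_of_opNorm_le (hT t (Set.Ioc_subset_Icc_self ht)) y)

theorem norm_sum_apply_map_add_le (hα0 : 0 < α) (hα1 : α ≤ 1) (hM : 0 ≤ M) (hC : 0 ≤ C)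
    (h0 : T 0 = ContinuousLinearMap.id ℝ X) (hT : ∀ t ∈ Set.Icc 0 T₀, ‖T t‖ ≤ M)
    (hcomm : ∀ t ∈ Set.Icc 0 T₀, ∀ x, A (T t x) = T t (A x))
    (hsmooth : ∀ t ∈ Set.Ioc 0 T₀, ‖A.comp (T t)‖ ≤ C / t ^ (1 - α))
    {τ : ℝ} (hτ : 0 < τ) {n : ℕ} (hn : n * τ ≤ T₀) {x y : ℕ → X}
    (hx : ∀ k, ‖x k‖ ≤ C * τ ^ 2) (hy : ∀ k, ‖y k‖ ≤ C * τ ^ 2)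
    (hxy : ∀ k, ‖A (x k) + y k‖ ≤ C * τ) :
    ‖∑ k ∈ range n, T (k * τ) (A (x k) + y k)‖ ≤ (C + C ^ 2 * T₀ ^ α / α + M * C * T₀) * τ := by
  have hT₀ : 0 ≤ T₀ := le_trans (by positivity) hn
  rcases n with _ | m
  · simp only [range_zero, sum_empty, norm_zero]
    positivity
  push_cast at hn
  have hmτ : m * τ ≤ T₀ := by linarith
  rw [sum_range_succ']
  calc _ ≤ ∑ k ∈ range m, (C / ((k + 1) * τ) ^ (1 - α) * (C * τ ^ 2) + M * (C * τ ^ 2))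
        + C * τ := by
        refine (norm_add_le _ _).trans (add_le_add ((norm_sum_le _ _).trans ?_) ?_)
        · refine sum_le_sum fun k hk ↦ ?_
          have hkm : (k : ℝ) + 1 ≤ m := by exact_mod_cast mem_range.mp hk
          push_cast
          refine (norm_apply_map_add_le hT hcomm hsmooth ⟨by positivity, ?_⟩ _ _).trans ?_
          · nlinarith
          gcongr
          exacts [hx _, hy _]
        · simpa [h0] using hxy 0
    _ = C * τ * C * ∑ k ∈ range m, τ / ((k + 1) * τ) ^ (1 - α) + M * C * (m * τ) * τ
        + C * τ := by
        rw [sum_add_distrib, mul_sum, sum_const, card_range, nsmul_eq_mul]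
        congr 2
        · exact sum_congr rfl fun k _ ↦ by ring
        · ring
    _ ≤ C * τ * C * (T₀ ^ α / α) + M * C * T₀ * τ + C * τ := by
        gcongr
        exact (Real.sum_div_rpow_le hα0 hα1 hτ m).trans (by gcongr)
    _ = _ := by ring

end Semigroup

theorem error_accumulation_order_one_fractional_general
    (T₀ M C L α : ℝ) (hM : 0 ≤ M) (hC : 0 ≤ C) (hL : 0 ≤ L)
    (hα : α ∈ Set.Ioc (0:ℝ) 1) :
    ∃ K : ℝ,
      ∀ (X : Type*) [NormedAddCommGroup X] [NormedSpace ℝ X],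
      ∀ (T : ℝ → X →L[ℝ] X) (A : X →L[ℝ] X),
      T 0 = ContinuousLinearMap.id ℝ X →
      (∀ s t : ℝ, 0 ≤ s → 0 ≤ t → s + t ≤ T₀ → T (s + t) = (T s).comp (T t)) →
      (∀ t ∈ Set.Icc (0:ℝ) T₀, ‖T t‖ ≤ M) →
      (∀ t ∈ Set.Icc (0:ℝ) T₀, ∀ x : X, A (T t x) = T t (A x)) →
      (∀ t ∈ Set.Ioc (0:ℝ) T₀, ‖A.comp (T t)‖ ≤ C / t ^ ((1:ℝ) - α)) →
      ∀ τ : ℝ, 0 < τ → τ ≤ min 1 T₀ →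
      ∀ (e E' h r : ℕ → X),
      e 0 = 0 →
      (∀ n, e (n + 1) = T τ (e n) + E' n + A (h (n + 1)) + r (n + 1)) →
      (∀ n, ‖E' n‖ ≤ L * τ * ‖e n‖) →
      (∀ n, ‖h n‖ ≤ C * τ ^ 2) →
      (∀ n, ‖r n‖ ≤ C * τ ^ 2) →
      (∀ n, ‖A (h n) + r n‖ ≤ C * τ) →
      ∀ n : ℕ, (n : ℝ) * τ ≤ T₀ → ‖e n‖ ≤ K * τ := by
  obtain ⟨hα0, hα1⟩ := hα
  set D := C + C ^ 2 * T₀ ^ α / α + M * C * T₀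
  refine ⟨D * Real.exp (M * L * T₀), ?_⟩
  intro X _ _ T A h0 hadd hT hcomm hsmooth τ hτ _ e E' h r he0 hrec hE hh hr hAhr n hn
  have hgrid : ∀ m ≤ n, (m : ℝ) * τ ≤ T₀ := fun m hm ↦
    (mul_le_mul_of_nonneg_right (Nat.cast_le.mpr hm) hτ.le).trans hn
  have hstep : ∀ m ≤ n, ‖e m‖ ≤ M * L * τ * ∑ k ∈ range m, ‖e k‖ + D * τ := by
    intro m hm
    rw [eq_sum_apply_of_eq_apply_add h0 hadd hτ.le he0
      (f := fun j ↦ E' j + (A (h (j + 1)) + r (j + 1))) (fun j ↦ by rw [hrec]; abel) (hgrid m hm)]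
    simp only [map_add (T _) (E' _), sum_add_distrib]
    refine (norm_add_le _ _).trans (add_le_add ?_ (norm_sum_apply_map_add_le hα0 hα1 hM hC h0
      hT hcomm hsmooth hτ (hgrid m hm) (fun _ ↦ hh _) (fun _ ↦ hr _) (fun _ ↦ hAhr _)))
    calc _ ≤ M * ∑ k ∈ range m, ‖E' (m - 1 - k)‖ := norm_sum_apply_le hT hτ.le (hgrid m hm) _
      _ ≤ M * ∑ k ∈ range m, L * τ * ‖e (m - 1 - k)‖ := by gcongr; exact hE _
      _ = M * L * τ * ∑ k ∈ range m, ‖e k‖ := by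
        rw [← mul_sum, sum_range_reflect (fun k ↦ ‖e k‖)]
        ring
  have hD : 0 ≤ D := by
    have : 0 ≤ T₀ := (by positivity : (0 : ℝ) ≤ n * τ).trans hn
    positivity
  calc ‖e n‖ ≤ D * τ * (1 + M * L * τ) ^ n :=
        le_mul_one_add_pow_of_le_mul_sum_add (by positivity) hstep n le_rfl
    _ ≤ D * τ * Real.exp (M * L * T₀) := by
        gcongr
        exact Real.one_add_mul_pow_le_exp (by positivity) hτ.le hn
    _ = D * Real.exp (M * L * T₀) * τ := by ring

theorem error_accumulation_order_one_fractional
    (T₀ M C L α : ℝ) (hT₀ : 0 < T₀) (hM : 0 ≤ M) (hC : 0 ≤ C) (hL : 0 ≤ L)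
    (hα : α ∈ Set.Ioc (0:ℝ) 1) :
    ∃ K : ℝ,
      ∀ (X : Type*) [NormedAddCommGroup X] [NormedSpace ℝ X],
      ∀ (T : ℝ → X →L[ℝ] X) (A : X →L[ℝ] X),
      T 0 = ContinuousLinearMap.id ℝ X →
      (∀ s t : ℝ, 0 ≤ s → 0 ≤ t → s + t ≤ T₀ → T (s + t) = (T s).comp (T t)) →
      (∀ t ∈ Set.Icc (0:ℝ) T₀, ‖T t‖ ≤ M) →
      (∀ t ∈ Set.Icc (0:ℝ) T₀, ∀ x : X, A (T t x) = T t (A x)) →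
      (∀ t ∈ Set.Ioc (0:ℝ) T₀, ‖A.comp (T t)‖ ≤ C / t ^ ((1:ℝ) - α)) →
      ∀ τ : ℝ, 0 < τ → τ ≤ min 1 T₀ →
      ∀ (e E' h r : ℕ → X),
      e 0 = 0 →
      (∀ n, e (n + 1) = T τ (e n) + E' n + A (h (n + 1)) + r (n + 1)) →
      (∀ n, ‖E' n‖ ≤ L * τ * ‖e n‖) →
      (∀ n, ‖h n‖ ≤ C * τ ^ 2) →
      (∀ n, ‖r n‖ ≤ C * τ ^ 2) →
      (∀ n, ‖A (h n) + r n‖ ≤ C * τ) →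
      ∀ n : ℕ, (n : ℝ) * τ ≤ T₀ → ‖e n‖ ≤ K * τ :=
  error_accumulation_order_one_fractional_general T₀ M C L α hM hC hL hα
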